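/- arXiv:1609.09450 — 3 statements merged into one kernel-verified Lean document; each statement's English description precedes it below -/
import Mathlib

section
/- Let K ⊆ {1,…,N}. Then the descent cone of the binary-constrained ℓ¹ objective at 𝟙_K equals N_K ∩ H_K; explicitly, ⋃_{τ>0} {y ∈ ℝ^N : 𝟙_K + τy ∈ [0,1]^N and ‖𝟙_K + τy‖₁ ≤ ‖𝟙_K‖₁} = N_K ∩ H_K. -/
open Finset

/-- The indicator vector of a set `K ⊆ {1,…,N}`: 1 on `K`, 0 off `K`. -/
noncomputable def indVec {N : ℕ} (K : Finset (Fin N)) : Fin N → ℝ :=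
  fun i => if i ∈ K then 1 else 0

lemma sum_split {N : ℕ} (K : Finset (Fin N)) (τ : ℝ) (hτ : 0 < τ) (y : Fin N → ℝ)
    (hbox : ∀ i, indVec K i + τ * y i ∈ Set.Icc (0:ℝ) 1) :
    ∑ i, |indVec K i + τ * y i|
      = K.card + τ * (∑ i ∈ K, y i) + τ * (∑ i ∈ Kᶜ, y i) := by
  rw [← Finset.sum_add_sum_compl K]
  have h1 : ∑ i ∈ K, |indVec K i + τ * y i| = ∑ i ∈ K, (1 + τ * y i) := by
    apply Finset.sum_congr rfl
    intro i hi
    have h0 := (hbox i).1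
    simp only [indVec, if_pos hi] at h0 ⊢
    exact abs_of_nonneg h0
  have h2 : ∑ i ∈ Kᶜ, |indVec K i + τ * y i| = ∑ i ∈ Kᶜ, τ * y i := by
    apply Finset.sum_congr rfl
    intro i hi
    rw [Finset.mem_compl] at hi
    have h0 := (hbox i).1
    simp only [indVec, if_neg hi, zero_add] at h0 ⊢
    exact abs_of_nonneg h0
  rw [h1, h2, Finset.sum_add_distrib, ← Finset.mul_sum, ← Finset.mul_sum,
    Finset.sum_const, nsmul_eq_mul, mul_one]

lemma sum_ind {N : ℕ} (K : Finset (Fin N)) :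
    ∑ i, |indVec K i| = (K.card : ℝ) := by
  rw [← Finset.sum_add_sum_compl K]
  have h1 : ∑ i ∈ K, |indVec K i| = ∑ i ∈ K, (1:ℝ) := by
    apply Finset.sum_congr rfl; intro i hi; simp [indVec, if_pos hi]
  have h2 : ∑ i ∈ Kᶜ, |indVec K i| = 0 := by
    apply Finset.sum_eq_zero; intro i hi
    rw [Finset.mem_compl] at hi
    simp [indVec, if_neg hi]
  rw [h1, h2]; simp

theorem stmt4 {N : ℕ} (K : Finset (Fin N)) :
    {y : Fin N → ℝ | ∃ τ : ℝ, 0 < τ ∧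
        (∀ i, indVec K i + τ * y i ∈ Set.Icc (0:ℝ) 1) ∧
        ∑ i, |indVec K i + τ * y i| ≤ ∑ i, |indVec K i|} =
      {w : Fin N → ℝ | (∑ i ∈ Kᶜ, |w i| ≤ ∑ i ∈ K, |w i|) ∧
        (∀ i ∈ K, w i ≤ 0) ∧ ∀ i ∉ K, 0 ≤ w i} := by
  ext y
  simp only [Set.mem_setOf_eq]
  constructor
  · rintro ⟨τ, hτ, hbox, hsum⟩
    have hK : ∀ i ∈ K, y i ≤ 0 := by
      intro i hi
      have h := (hbox i).2
      simp only [indVec, if_pos hi] at h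
      nlinarith
    have hKc : ∀ i ∉ K, 0 ≤ y i := by
      intro i hi
      have h := (hbox i).1
      simp only [indVec, if_neg hi, zero_add] at h
      nlinarith
    refine ⟨?_, hK, hKc⟩
    rw [sum_split K τ hτ y hbox, sum_ind K] at hsum
    have hsum' : ∑ i ∈ Kᶜ, y i ≤ -∑ i ∈ K, y i := by
      nlinarith
    have e1 : ∑ i ∈ Kᶜ, |y i| = ∑ i ∈ Kᶜ, y i := by
      apply Finset.sum_congr rfl; intro i hi
      exact abs_of_nonneg (hKc i (Finset.mem_compl.mp hi))
    have e2 : ∑ i ∈ K, |y i| = -∑ i ∈ K, y i := by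
      rw [← Finset.sum_neg_distrib]
      apply Finset.sum_congr rfl; intro i hi
      exact abs_of_nonpos (hK i hi)
    rw [e1, e2]; exact hsum'
  · rintro ⟨hnorm, hK, hKc⟩
    set S : ℝ := ∑ i, |y i| with hS
    have hS0 : 0 ≤ S := Finset.sum_nonneg fun i _ => abs_nonneg _
    have hτ : 0 < (1 + S)⁻¹ := by positivity
    have hbox : ∀ i, indVec K i + (1+S)⁻¹ * y i ∈ Set.Icc (0:ℝ) 1 := by
      intro i
      have hiS : |y i| ≤ S := Finset.single_le_sum (f := fun i => |y i|)
        (fun j _ => abs_nonneg _) (Finset.mem_univ i)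
      have hmul : (1+S)⁻¹ * |y i| ≤ 1 := by
        rw [inv_mul_le_iff₀ (by linarith)]
        linarith
    -- |τ y i| ≤ 1
      have habs : |(1+S)⁻¹ * y i| ≤ 1 := by
        rw [abs_mul, abs_of_pos hτ]; exact hmul
      rw [abs_le] at habs
      by_cases hi : i ∈ K
      · have hy := hK i hi
        constructor
        · simp only [indVec, if_pos hi]; linarith [habs.1]
        · simp only [indVec, if_pos hi]
          nlinarith
      · have hy := hKc i hi
        constructor
        · simp only [indVec, if_neg hi, zero_add]; positivity
        · simp only [indVec, if_neg hi, zero_add]; linarith [habs.2]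
    refine ⟨(1+S)⁻¹, hτ, hbox, ?_⟩
    · rw [sum_split K (1+S)⁻¹ hτ y hbox, sum_ind K]
      have e1 : ∑ i ∈ Kᶜ, y i ≤ -∑ i ∈ K, y i := by
        have a1 : ∑ i ∈ Kᶜ, y i = ∑ i ∈ Kᶜ, |y i| := by
          apply Finset.sum_congr rfl; intro i hi
          exact (abs_of_nonneg (hKc i (Finset.mem_compl.mp hi))).symm
        have a2 : -∑ i ∈ K, y i = ∑ i ∈ K, |y i| := by
          rw [← Finset.sum_neg_distrib]
          apply Finset.sum_congr rfl; intro i hi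
          exact (abs_of_nonpos (hK i hi)).symm
        rw [a1, a2]; exact hnorm
      nlinarith
end

section
/- Let A ∈ ℝ^{m×N}, let K₁, K₋₁ ⊆ {1,…,N} be disjoint with K = K₁ ∪ K₋₁, let x_±1 = 𝟙_{K₁} − 𝟙_{K₋₁}, and let 0 < ρ < 1, τ > 0. Then the following are equivalent: (i) for every v ∈ H_{K₁,K₋₁} one has Σ_{i∈K₋₁} v_i − Σ_{i∈K₁} v_i ≤ ρ Σ_{i∉K} |v_i| + τ‖Av‖₂ (the robust bipolar ternary null space property with constants ρ, τ relative to K₁, K₋₁); (ii) for every z ∈ [−1,1]^N one has |K| − Σ_{i∈K₁} z_i + Σ_{i∈K₋₁} z_i ≤ ρ Σ_{i∉K} |z_i| + τ‖A(z − x_±1)‖₂. -/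
open Finset Matrix

/-- The Euclidean norm on `ℝ^m`. -/
noncomputable def l2norm {m : ℕ} (y : Fin m → ℝ) : ℝ :=
  Real.sqrt (∑ j, y j ^ 2)

/-- `H_{K₁,K₋₁} = {w : w_i ≤ 0 for i ∈ K₁, w_i ≥ 0 for i ∈ K₋₁}`. -/
def memHpm {N : ℕ} (K₁ Kneg : Finset (Fin N)) (w : Fin N → ℝ) : Prop :=
  (∀ i ∈ K₁, w i ≤ 0) ∧ ∀ i ∈ Kneg, 0 ≤ w i

lemma l2norm_smul {m : ℕ} (t : ℝ) (ht : 0 ≤ t) (y : Fin m → ℝ) :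
    l2norm (fun j => t * y j) = t * l2norm y := by
  unfold l2norm
  have h : (∑ j, (t * y j) ^ 2) = t ^ 2 * ∑ j, y j ^ 2 := by
    rw [Finset.mul_sum]
    exact Finset.sum_congr rfl fun j _ => by ring
  rw [h, Real.sqrt_mul (sq_nonneg t), Real.sqrt_sq ht]

theorem stmt14 {m N : ℕ} (A : Matrix (Fin m) (Fin N) ℝ)
    (K₁ Kneg : Finset (Fin N)) (hdisj : Disjoint K₁ Kneg)
    (K : Finset (Fin N)) (hK : K = K₁ ∪ Kneg)
    (xpm : Fin N → ℝ) (hxpm : xpm = indVec K₁ - indVec Kneg)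
    (ρ τ : ℝ) (hρ0 : 0 < ρ) (hρ1 : ρ < 1) (hτ : 0 < τ) :
    (∀ v : Fin N → ℝ, memHpm K₁ Kneg v →
        ∑ i ∈ Kneg, v i - ∑ i ∈ K₁, v i ≤
          ρ * ∑ i ∈ Kᶜ, |v i| + τ * l2norm (A.mulVec v)) ↔
      (∀ z : Fin N → ℝ, (∀ i, z i ∈ Set.Icc (-1:ℝ) 1) →
        (K.card : ℝ) - ∑ i ∈ K₁, z i + ∑ i ∈ Kneg, z i ≤
          ρ * ∑ i ∈ Kᶜ, |z i| + τ * l2norm (A.mulVec (z - xpm))) := by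
  -- basic facts about xpm
  have hxpm1 : ∀ i ∈ K₁, xpm i = 1 := by
    intro i hi
    have hni : i ∉ Kneg := Finset.disjoint_left.mp hdisj hi
    simp [hxpm, indVec, hi, hni]
  have hxpm2 : ∀ i ∈ Kneg, xpm i = -1 := by
    intro i hi
    have hni : i ∉ K₁ := Finset.disjoint_right.mp hdisj hi
    simp [hxpm, indVec, hi, hni]
  have hxpm0 : ∀ i ∈ Kᶜ, xpm i = 0 := by
    intro i hi
    rw [Finset.mem_compl, hK, Finset.mem_union] at hi
    push_neg at hi
    simp [hxpm, indVec, hi.1, hi.2]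
  have hcard : (K.card : ℝ) = K₁.card + Kneg.card := by
    rw [hK, Finset.card_union_of_disjoint hdisj]; push_cast; ring
  constructor
  · intro h z hz
    set v : Fin N → ℝ := z - xpm with hv
    have hmem : memHpm K₁ Kneg v := by
      constructor
      · intro i hi
        have := (hz i).2
        simp [hv, hxpm1 i hi]; linarith
      · intro i hi
        have := (hz i).1
        simp [hv, hxpm2 i hi]; linarith
    have := h v hmem
    have e1 : ∑ i ∈ Kneg, v i = ∑ i ∈ Kneg, z i + Kneg.card := by
      simp only [hv, Pi.sub_apply]
      rw [Finset.sum_congr rfl (fun i hi => by rw [hxpm2 i hi])]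
      rw [Finset.sum_sub_distrib]
      simp
    have e2 : ∑ i ∈ K₁, v i = ∑ i ∈ K₁, z i - K₁.card := by
      simp only [hv, Pi.sub_apply]
      rw [Finset.sum_congr rfl (fun i hi => by rw [hxpm1 i hi])]
      rw [Finset.sum_sub_distrib]
      simp
    have e3 : ∑ i ∈ Kᶜ, |v i| = ∑ i ∈ Kᶜ, |z i| := by
      refine Finset.sum_congr rfl fun i hi => ?_
      simp [hv, hxpm0 i hi]
    rw [e1, e2, e3] at this
    linarith
  · intro h v hmem
    rcases hmem with ⟨h1, h2⟩
    set S : ℝ := ∑ i, |v i| with hS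
    have hS0 : 0 ≤ S := Finset.sum_nonneg fun i _ => abs_nonneg _
    set t : ℝ := 1 / (1 + S) with ht
    have ht0 : 0 < t := by positivity
    have hbound : ∀ i, t * |v i| ≤ 1 := by
      intro i
      have h1 : |v i| ≤ S := Finset.single_le_sum (f := fun i => |v i|)
        (fun i _ => abs_nonneg _) (Finset.mem_univ i)
      rw [ht, div_mul_eq_mul_div, div_le_one (by linarith)]
      linarith
    set z : Fin N → ℝ := fun i => t * v i + xpm i with hz
    have hzmem : ∀ i, z i ∈ Set.Icc (-1:ℝ) 1 := by
      intro i
      by_cases hi1 : i ∈ K₁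
      · have hv1 : v i ≤ 0 := h1 i hi1
        have := hbound i
        rw [abs_of_nonpos hv1] at this
        constructor <;> simp [hz, hxpm1 i hi1] <;> nlinarith
      · by_cases hi2 : i ∈ Kneg
        · have hv2 : 0 ≤ v i := h2 i hi2
          have := hbound i
          rw [abs_of_nonneg hv2] at this
          constructor <;> simp [hz, hxpm2 i hi2] <;> nlinarith
        · have hic : i ∈ Kᶜ := by
            rw [Finset.mem_compl, hK, Finset.mem_union]; tauto
          have := hbound i
          have habs : |z i| ≤ 1 := by
            rw [hz]; simp only [hxpm0 i hic, add_zero]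
            rw [abs_mul, abs_of_pos ht0] at *; exact this
          exact abs_le.mp habs
    have key := h z hzmem
    have ezv : z - xpm = fun i => t * v i := by
      funext i; simp [hz]
    have e1 : ∑ i ∈ K₁, z i = t * ∑ i ∈ K₁, v i + K₁.card := by
      simp only [hz]
      rw [Finset.sum_add_distrib, Finset.mul_sum,
        Finset.sum_congr rfl (fun i hi => hxpm1 i hi)]
      simp
    have e2 : ∑ i ∈ Kneg, z i = t * ∑ i ∈ Kneg, v i - Kneg.card := by
      simp only [hz]
      rw [Finset.sum_add_distrib, Finset.mul_sum,
        Finset.sum_congr rfl (fun i hi => hxpm2 i hi)]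
      simp; ring
    have e3 : ∑ i ∈ Kᶜ, |z i| = t * ∑ i ∈ Kᶜ, |v i| := by
      rw [Finset.mul_sum]
      refine Finset.sum_congr rfl fun i hi => ?_
      simp [hz, hxpm0 i hi, abs_mul, abs_of_pos ht0]
    have e4 : l2norm (A.mulVec (z - xpm)) = t * l2norm (A.mulVec v) := by
      rw [ezv]
      have : A.mulVec (fun i => t * v i) = fun j => t * A.mulVec v j := by
        funext j
        simp [Matrix.mulVec, dotProduct, Finset.mul_sum]
        exact Finset.sum_congr rfl fun i _ => by ring
      rw [this, l2norm_smul t ht0.le]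
    rw [e1, e2, e3, e4, hcard] at key
    have key2 : t * (∑ i ∈ Kneg, v i - ∑ i ∈ K₁, v i) ≤
        t * (ρ * ∑ i ∈ Kᶜ, |v i| + τ * l2norm (A.mulVec v)) := by
      nlinarith [key]
    exact le_of_mul_le_mul_left (by linarith [key2]) ht0
end

section
/- Let A ∈ ℝ^{m×N} satisfy the robust bipolar ternary null space property with constants 0 < ρ < 1 and τ > 0 relative to disjoint sets K₁, K₋₁ ⊆ {1,…,N} with K = K₁ ∪ K₋₁, i.e. Σ_{i∈K₋₁} v_i − Σ_{i∈K₁} v_i ≤ ρ Σ_{i∉K} |v_i| + τ‖Av‖₂ for all v ∈ H_{K₁,K₋₁}. Set x_±1 = 𝟙_{K₁} − 𝟙_{K₋₁} and suppose b = Ax_±1 + e with ‖e‖₂ ≤ η. Then every ẑ minimizing ‖z‖₁ over all z ∈ [−1,1]^N with ‖Az − b‖₂ ≤ η satisfies ‖ẑ − x_±1‖₁ ≤ 4τη/(1 − ρ). -/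
open Finset Matrix

lemma l2norm_eq {m : ℕ} (y : Fin m → ℝ) :
    l2norm y = ‖(WithLp.equiv 2 (Fin m → ℝ)).symm y‖ := by
  rw [EuclideanSpace.norm_eq]
  simp [l2norm, Real.norm_eq_abs, sq_abs]

lemma l2norm_add_le {m : ℕ} (x y : Fin m → ℝ) :
    l2norm (x + y) ≤ l2norm x + l2norm y := by
  simp only [l2norm_eq]
  exact norm_add_le _ _

lemma l2norm_neg {m : ℕ} (x : Fin m → ℝ) : l2norm (-x) = l2norm x := by
  simp only [l2norm_eq]
  exact norm_neg _

theorem stmt15 {m N : ℕ} (A : Matrix (Fin m) (Fin N) ℝ)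
    (K₁ Kneg : Finset (Fin N)) (hdisj : Disjoint K₁ Kneg)
    (K : Finset (Fin N)) (hK : K = K₁ ∪ Kneg)
    (ρ τ η : ℝ) (hρ0 : 0 < ρ) (hρ1 : ρ < 1) (hτ : 0 < τ)
    (hRBTNSP : ∀ v : Fin N → ℝ, memHpm K₁ Kneg v →
      ∑ i ∈ Kneg, v i - ∑ i ∈ K₁, v i ≤
        ρ * ∑ i ∈ Kᶜ, |v i| + τ * l2norm (A.mulVec v))
    (xpm : Fin N → ℝ) (hxpm : xpm = indVec K₁ - indVec Kneg)
    (b e : Fin m → ℝ) (hb : b = A.mulVec xpm + e) (he : l2norm e ≤ η)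
    (zhat : Fin N → ℝ) (hzbox : ∀ i, zhat i ∈ Set.Icc (-1:ℝ) 1)
    (hzfeas : l2norm (A.mulVec zhat - b) ≤ η)
    (hzmin : ∀ z : Fin N → ℝ, (∀ i, z i ∈ Set.Icc (-1:ℝ) 1) →
      l2norm (A.mulVec z - b) ≤ η → ∑ i, |zhat i| ≤ ∑ i, |z i|) :
    ∑ i, |zhat i - xpm i| ≤ 4 * τ * η / (1 - ρ) := by
  set v : Fin N → ℝ := fun i => zhat i - xpm i with hv
  -- values of xpm
  have hx1 : ∀ i ∈ K₁, xpm i = 1 := by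
    intro i hi
    have : i ∉ Kneg := fun h => (Finset.disjoint_left.mp hdisj hi) h
    simp [hxpm, indVec, hi, this]
  have hxneg : ∀ i ∈ Kneg, xpm i = -1 := by
    intro i hi
    have : i ∉ K₁ := fun h => (Finset.disjoint_left.mp hdisj h) hi
    simp [hxpm, indVec, hi, this]
  have hx0 : ∀ i ∉ K, xpm i = 0 := by
    intro i hi
    rw [hK, Finset.mem_union] at hi
    push_neg at hi
    simp [hxpm, indVec, hi.1, hi.2]
  have hmem : memHpm K₁ Kneg v := by
    constructor
    · intro i hi
      have := (hzbox i).2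
      simp [hv, hx1 i hi]; linarith
    · intro i hi
      have := (hzbox i).1
      simp [hv, hxneg i hi]; linarith
  have hη : 0 ≤ η := le_trans (Real.sqrt_nonneg _) he
  -- ‖A v‖ ≤ 2η
  have hAveq : A.mulVec v = (A.mulVec zhat - b) + e := by
    have : A.mulVec v = A.mulVec zhat - A.mulVec xpm := by
      have : v = zhat - xpm := rfl
      rw [this, A.mulVec_sub]
    rw [this, hb]
    abel
  have hAv : l2norm (A.mulVec v) ≤ 2 * η := by
    rw [hAveq]
    calc l2norm ((A.mulVec zhat - b) + e) ≤ l2norm (A.mulVec zhat - b) + l2norm e :=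
          l2norm_add_le _ _
      _ ≤ η + η := add_le_add hzfeas he
      _ = 2 * η := by ring
  -- xpm is feasible
  have hxfeas : l2norm (A.mulVec xpm - b) ≤ η := by
    have : A.mulVec xpm - b = -e := by rw [hb]; abel
    rw [this, l2norm_neg]; exact he
  have hxbox : ∀ i, xpm i ∈ Set.Icc (-1:ℝ) 1 := by
    intro i
    by_cases h1 : i ∈ K₁
    · rw [hx1 i h1]; constructor <;> norm_num
    · by_cases h2 : i ∈ Kneg
      · rw [hxneg i h2]; constructor <;> norm_num
      · have : i ∉ K := by rw [hK, Finset.mem_union]; tauto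
        rw [hx0 i this]; constructor <;> norm_num
  have hmin := hzmin xpm hxbox hxfeas
  -- key sums
  set S1 : ℝ := ∑ i ∈ K, |v i| with hS1
  set S2 : ℝ := ∑ i ∈ Kᶜ, |v i| with hS2
  have hSA : ∑ i ∈ Kneg, v i - ∑ i ∈ K₁, v i = S1 := by
    rw [hS1, hK, Finset.sum_union hdisj]
    rw [Finset.sum_congr rfl (fun i hi => abs_of_nonpos (hmem.1 i hi)),
        Finset.sum_congr rfl (fun i hi => abs_of_nonneg (hmem.2 i hi))]
    simp [Finset.sum_neg_distrib]
    ring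
  -- S2 ≤ S1
  have hsplit : ∀ f : Fin N → ℝ, ∑ i, f i = ∑ i ∈ K, f i + ∑ i ∈ Kᶜ, f i := by
    intro f
    rw [Finset.sum_add_sum_compl]
  have hSB : S2 ≤ S1 := by
    have h1 : ∑ i ∈ Kᶜ, |zhat i| = S2 := by
      apply Finset.sum_congr rfl
      intro i hi
      rw [Finset.mem_compl] at hi
      simp [hv, hx0 i hi]
    have h2 : ∑ i ∈ Kᶜ, |xpm i| = 0 := by
      apply Finset.sum_eq_zero
      intro i hi
      rw [Finset.mem_compl] at hi
      simp [hx0 i hi]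
    have h3 : ∑ i ∈ K, |zhat i| + S2 ≤ ∑ i ∈ K, |xpm i| := by
      have := hmin
      rw [hsplit (fun i => |zhat i|), hsplit (fun i => |xpm i|), h1, h2] at this
      linarith
    have h4 : ∑ i ∈ K, (|xpm i| - |zhat i|) ≤ S1 := by
      rw [hS1, hK, Finset.sum_union hdisj, Finset.sum_union hdisj]
      apply add_le_add
      · apply Finset.sum_le_sum
        intro i hi
        have hvv : v i = zhat i - 1 := by simp [hv, hx1 i hi]
        rw [hx1 i hi, hvv, abs_of_nonpos (by linarith [(hzbox i).2] : zhat i - 1 ≤ 0)]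
        have := le_abs_self (zhat i)
        simp only [abs_one]
        linarith
      · apply Finset.sum_le_sum
        intro i hi
        have hvv : v i = zhat i + 1 := by simp [hv, hxneg i hi]
        rw [hxneg i hi, hvv, abs_of_nonneg (by linarith [(hzbox i).1] : (0:ℝ) ≤ zhat i + 1)]
        have := neg_abs_le (zhat i)
        simp only [abs_neg, abs_one]
        linarith
    rw [Finset.sum_sub_distrib] at h4
    linarith
  have hNSP := hRBTNSP v hmem
  rw [hSA] at hNSP
  have hS1bound : S1 ≤ 2 * τ * η / (1 - ρ) := by
    have h5 : τ * l2norm (A.mulVec v) ≤ τ * (2 * η) :=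
      mul_le_mul_of_nonneg_left hAv hτ.le
    have h7 : S1 * (1 - ρ) ≤ 2 * τ * η := by nlinarith
    exact (le_div_iff₀ (by linarith : (0:ℝ) < 1 - ρ)).mpr h7
  have htotal : ∑ i, |zhat i - xpm i| = S1 + S2 := by
    rw [hsplit (fun i => |zhat i - xpm i|)]
  rw [htotal]
  have : 4 * τ * η / (1 - ρ) = 2 * (2 * τ * η / (1 - ρ)) := by ring
  rw [this]
  linarith
end
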